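/- arXiv:1604.03138 — 3 statements merged into one kernel-verified Lean document; each statement's English description precedes it below -/
import Mathlib

section
/- Let a₁, …, a_{n+1} ∈ ℤⁿ generate a rank-n sublattice, with a_{n+1} primitive. Set dᵢ = |det((a_j)_{j≠i})|. Then gcd(d₁, …, d_n) divides d_{n+1}; equivalently gcd(d₁,…,d_n) = gcd(d₁,…,d_{n+1}). -/
/-!
Let `A` be the `n × (n+1)` matrix with columns `aⱼ`. The `(n+1) × (n+1)` matrix whose rows are
row `r` of `A` followed by all rows of `A` has a repeated row, so expanding its determinant along
the first row gives the cofactor relation `∑ⱼ (-1)ʲ aⱼ,ᵣ det(omit j) = 0`. Hence every coordinate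
of `det(omit (n+1)) • a_{n+1}` is a combination of `d₁, …, dₙ`, so `gcd(d₁, …, dₙ)` divides it,
and primitivity of `a_{n+1}` removes the factor `a_{n+1}`.
-/

/-- The `n × n` integer matrix whose columns are the vectors `a j` for `j ≠ i`. -/
def omitMatrix {n : ℕ} (a : Fin (n + 1) → (Fin n → ℤ)) (i : Fin (n + 1)) :
    Matrix (Fin n) (Fin n) ℤ :=
  Matrix.of fun r c => a (i.succAbove c) r

open Finset

theorem Finset.dvd_of_forall_dvd_mul_of_gcd_eq_one {α β : Type*} [CommMonoidWithZero α]
    [StrongNormalizedGCDMonoid α] {s : Finset β} {f : β → α} {a b : α} (hf : s.gcd f = 1)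
    (h : ∀ i ∈ s, a ∣ b * f i) : a ∣ b := by
  rw [← dvd_normalize_iff, ← mul_one (normalize b), ← hf, ← Finset.gcd_mul_left]
  exact Finset.dvd_gcd h

theorem Fin.univ_gcd_eq_gcd_castSucc_last {α : Type*} [CommMonoidWithZero α]
    [NormalizedGCDMonoid α] {n : ℕ} (f : Fin (n + 1) → α) :
    univ.gcd f = GCDMonoid.gcd (univ.gcd fun i : Fin n => f i.castSucc) (f (Fin.last n)) := by
  rw [Fin.univ_castSuccEmb, gcd_cons, gcd_comm]
  simp only [gcd_def, map_val, Multiset.map_map]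
  rfl

theorem sum_neg_one_pow_mul_det_omitMatrix {n : ℕ} (a : Fin (n + 1) → (Fin n → ℤ)) (r : Fin n) :
    ∑ j : Fin (n + 1), (-1) ^ (j : ℕ) * a j r * (omitMatrix a j).det = 0 := by
  let B : Matrix (Fin (n + 1)) (Fin (n + 1)) ℤ :=
    Matrix.of fun k c => a c ((Fin.cons r id : Fin (n + 1) → Fin n) k)
  have hB : B.det = 0 := B.det_zero_of_row_eq (Fin.succ_ne_zero r).symm rfl
  rwa [Matrix.det_succ_row_zero] at hB

theorem gcd_det_omitMatrix_castSucc_dvd_det_mul {n : ℕ} (a : Fin (n + 1) → (Fin n → ℤ))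
    (r : Fin n) :
    ((univ.gcd fun i : Fin n => (omitMatrix a i.castSucc).det.natAbs : ℕ) : ℤ) ∣
      (omitMatrix a (Fin.last n)).det * a (Fin.last n) r := by
  have h := sum_neg_one_pow_mul_det_omitMatrix a r
  rw [Fin.sum_univ_castSucc, add_eq_zero_iff_eq_neg', Fin.val_last] at h
  rw [← ((isUnit_neg_one (α := ℤ)).pow n).dvd_mul_left, mul_comm (omitMatrix a _).det,
    ← mul_assoc, h, dvd_neg]
  refine dvd_sum fun i _ => Dvd.dvd.mul_left ?_ _
  exact Int.natCast_dvd.mpr (Finset.gcd_dvd (mem_univ i))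

theorem gcd_omit_divides_last_general (n : ℕ) (a : Fin (n + 1) → (Fin n → ℤ))
    (hprim : Finset.univ.gcd (fun j => (a (Fin.last n) j).natAbs) = 1) :
    (Finset.univ.gcd fun i : Fin n => (omitMatrix a i.castSucc).det.natAbs) ∣
        (omitMatrix a (Fin.last n)).det.natAbs ∧
      (Finset.univ.gcd fun i : Fin n => (omitMatrix a i.castSucc).det.natAbs) =
        Finset.univ.gcd fun i : Fin (n + 1) => (omitMatrix a i).det.natAbs := by
  have hdvd := Finset.dvd_of_forall_dvd_mul_of_gcd_eq_one hprim fun r _ => by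
    rw [← Int.natAbs_mul]
    exact Int.natCast_dvd.mp (gcd_det_omitMatrix_castSucc_dvd_det_mul a r)
  refine ⟨hdvd, ?_⟩
  rw [Fin.univ_gcd_eq_gcd_castSucc_last, (gcd_eq_left_iff _ _ (normalize_eq _)).mpr hdvd]

/-- Let `a₁, …, a_{n+1} ∈ ℤⁿ` generate a rank-`n` sublattice, with
`a_{n+1}` primitive, and set `dᵢ = |det((a_j)_{j ≠ i})|`. Then `gcd(d₁, …, d_n)` divides
`d_{n+1}`; equivalently, `gcd(d₁, …, d_n) = gcd(d₁, …, d_{n+1})`. -/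
theorem gcd_omit_divides_last (n : ℕ) (a : Fin (n + 1) → (Fin n → ℤ))
    (hrank : Submodule.span ℚ (Set.range fun i => fun j => ((a i j : ℚ))) = ⊤)
    (hprim : Finset.univ.gcd (fun j => (a (Fin.last n) j).natAbs) = 1) :
    (Finset.univ.gcd fun i : Fin n => (omitMatrix a i.castSucc).det.natAbs) ∣
        (omitMatrix a (Fin.last n)).det.natAbs ∧
      (Finset.univ.gcd fun i : Fin n => (omitMatrix a i.castSucc).det.natAbs) =
        Finset.univ.gcd fun i : Fin (n + 1) => (omitMatrix a i).det.natAbs :=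
  gcd_omit_divides_last_general n a hprim
end

section
/- Let a₁, …, a_{n+1} ∈ ℤⁿ generate a rank-n sublattice with a_{n+1} = (0,…,0,1)ᵀ. For k ≤ n let āₖ be the image of aₖ in ℤⁿ/⟨a_{n+1}⟩ ≅ ℤ^{n-1}, and let a′ₖ be the primitive vector with the same direction as āₖ (or 0 if āₖ = 0). Set d′_j = |det(a′₁,…,â′_j,…,a′_n)| and dᵢ = |det((a_j)_{j≠i})|. Then gcd(d′₁, …, d′_n) divides gcd(d₁, …, d_{n+1}). -/
/-- The primitive integer vector with the same direction as `w` (equal to `0` when `w = 0`):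
divide `w` by the gcd of its entries. -/
def primVec {k : ℕ} (w : Fin k → ℤ) : Fin k → ℤ :=
  fun j => w j / ((Finset.univ.gcd fun i => (w i).natAbs : ℕ) : ℤ)

/-- Let `a₁, …, a_{n+1} ∈ ℤⁿ` (here `n = m + 1`) generate a rank-`n`
sublattice with `a_{n+1} = (0, …, 0, 1)ᵀ`.  For `k ≤ n` let `āₖ` be the image of `aₖ` in
`ℤⁿ/⟨a_{n+1}⟩ ≅ ℤ^{n-1}` (the first `n - 1` coordinates), and let `a′ₖ` be the primitive
vector with the same direction as `āₖ` (or `0` if `āₖ = 0`).  Set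
`d′_j = |det(a′₁, …, â′_j, …, a′_n)|` and `dᵢ = |det((a_j)_{j ≠ i})|`.  Then
`gcd(d′₁, …, d′_n)` divides `gcd(d₁, …, d_{n+1})`. -/
theorem gcd_primitive_minors_dvd (m : ℕ) (a : Fin (m + 2) → (Fin (m + 1) → ℤ))
    (hrank : Submodule.span ℚ (Set.range fun i => fun j => ((a i j : ℚ))) = ⊤)
    (hlast : a (Fin.last (m + 1)) = Pi.single (Fin.last m) 1) :
    (Finset.univ.gcd fun j : Fin (m + 1) =>
        (Matrix.det (Matrix.of fun r c : Fin m =>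
          primVec (fun s : Fin m => a (j.succAbove c).castSucc s.castSucc) r)).natAbs) ∣
      Finset.univ.gcd fun i : Fin (m + 2) => (omitMatrix a i).det.natAbs := by
  -- abbreviations
  set w : Fin (m + 1) → Fin m → ℤ := fun k s => a k.castSucc s.castSucc with hwdef
  set A' : Fin (m + 1) → Matrix (Fin m) (Fin m) ℤ :=
    fun j => Matrix.of fun r c => primVec (w (j.succAbove c)) r with hA'
  set Abar : Fin (m + 1) → Matrix (Fin m) (Fin m) ℤ :=
    fun j => Matrix.of fun r c => w (j.succAbove c) r with hAbar
  have hw : ∀ k s, w k s =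
      ((Finset.univ.gcd fun i => (w k i).natAbs : ℕ) : ℤ) * primVec (w k) s := by
    intro k s
    have h1 : ((Finset.univ.gcd fun i => (w k i).natAbs : ℕ) : ℤ) ∣ w k s := by
      have := Finset.gcd_dvd (f := fun i => (w k i).natAbs) (Finset.mem_univ s)
      exact dvd_trans (Int.natCast_dvd_natCast.mpr this) (Int.natAbs_dvd.mpr dvd_rfl)
    exact (Int.mul_ediv_cancel' h1).symm
  have hdvd : ∀ j, (A' j).det ∣ (Abar j).det := by
    intro j
    have : (Abar j) = Matrix.of fun r c =>
        ((Finset.univ.gcd fun i => (w (j.succAbove c) i).natAbs : ℕ) : ℤ) * (A' j) r c := by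
      ext r c
      exact hw (j.succAbove c) r
    rw [this, Matrix.det_mul_row]
    exact dvd_mul_left _ _
  set D' : Fin (m + 1) → ℕ := fun j => (A' j).det.natAbs with hD'
  have hgcd : ∀ j, ((Finset.univ.gcd D' : ℕ) : ℤ) ∣ (Abar j).det := by
    intro j
    have h1 : Finset.univ.gcd D' ∣ D' j := Finset.gcd_dvd (Finset.mem_univ j)
    calc ((Finset.univ.gcd D' : ℕ) : ℤ) ∣ ((D' j : ℕ) : ℤ) := Int.natCast_dvd_natCast.mpr h1
      _ ∣ (A' j).det := Int.natAbs_dvd.mpr dvd_rfl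
      _ ∣ (Abar j).det := hdvd j
  apply Finset.dvd_gcd
  intro i _
  rw [← Int.natAbs_natCast (Finset.univ.gcd D'), Int.natAbs_dvd_natAbs]
  -- now goal : ((gcd D' : ℕ) : ℤ) ∣ (omitMatrix a i).det  (roughly)
  induction i using Fin.lastCases with
  | last =>
    rw [Matrix.det_succ_row (omitMatrix a (Fin.last (m+1))) (Fin.last m)]
    apply Finset.dvd_sum
    intro c _
    have hsub : (omitMatrix a (Fin.last (m+1))).submatrix (Fin.last m).succAbove c.succAbove
        = Abar c := by
      ext r s
      simp only [Matrix.submatrix_apply, omitMatrix, Matrix.of_apply, Fin.succAbove_last,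
        hAbar, hwdef]
    rw [hsub]
    exact Dvd.dvd.mul_left (hgcd c) _
  | cast k =>
    have hcol : ∀ r : Fin (m + 1), omitMatrix a k.castSucc r (Fin.last m)
        = (Pi.single (Fin.last m) 1 : Fin (m + 1) → ℤ) r := by
      intro r
      have : (k.castSucc : Fin (m+2)).succAbove (Fin.last m) = Fin.last (m + 1) := by
        rw [show (Fin.last m : Fin (m+1)) = (Fin.last m) from rfl]
        rw [Fin.succAbove_castSucc_of_le _ _ (Fin.le_last k)]
        rfl
      simp only [omitMatrix, Matrix.of_apply, this, hlast]
    rw [Matrix.det_succ_column (omitMatrix a k.castSucc) (Fin.last m)]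
    apply Finset.dvd_sum
    intro r _
    rcases eq_or_ne r (Fin.last m) with hr | hr
    · subst hr
      have hsub : (omitMatrix a k.castSucc).submatrix (Fin.last m).succAbove
          (Fin.last m).succAbove = Abar k := by
        ext r s
        simp only [Matrix.submatrix_apply, omitMatrix, Matrix.of_apply, Fin.succAbove_last,
          hAbar, hwdef, Fin.castSucc_succAbove_castSucc]
      rw [hsub]
      exact Dvd.dvd.mul_left (hgcd k) _
    · rw [hcol r, Pi.single_eq_of_ne hr]
      simp
end

section
/- Let p be a prime and v₁, …, vₙ, v₊, v₋ ∈ ℤⁿ with v₊ = (0,…,0,1)ᵀ. If p divides every determinant det(v_{i₁},…,v_{i_{n-1}}, v₊) for every (n−1)-element subset {i₁,…,i_{n-1}} ⊂ {1,…,n}, and if the primitive vectors v′ᵢ obtained from the projections v̄ᵢ of vᵢ to ℤ^{n-1} satisfy that p does not divide gcd over all (n−1)-subsets of det(v′_{i₁},…,v′_{i_{n-1}}), then there exists i such that p divides every coordinate v_iʲ for j ≠ n. -/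
lemma natCast_gcd_natAbs_dvd {ι : Type*} (s : Finset ι) (w : ι → ℤ) {j : ι} (hj : j ∈ s) :
    ((s.gcd fun i => (w i).natAbs : ℕ) : ℤ) ∣ w j :=
  Int.dvd_natAbs.mp (Int.natCast_dvd_natCast.mpr (Finset.gcd_dvd hj))

lemma gcd_mul_primVec {k : ℕ} (w : Fin k → ℤ) (j : Fin k) :
    ((Finset.univ.gcd fun i => (w i).natAbs : ℕ) : ℤ) * primVec w j = w j :=
  Int.mul_ediv_cancel' (natCast_gcd_natAbs_dvd _ w (Finset.mem_univ j))

lemma det_eq_prod_gcd_mul_det_primVec {m : ℕ} (w : Fin m → Fin m → ℤ) :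
    (Matrix.of fun r c => w c r).det =
      (∏ c, ((Finset.univ.gcd fun i => (w c i).natAbs : ℕ) : ℤ)) *
        (Matrix.of fun r c => primVec (w c) r).det := by
  rw [← Matrix.det_mul_row]
  congr 1
  ext r c
  exact (gcd_mul_primVec (w c) r).symm

lemma det_snoc_single_last {R : Type*} [CommRing R] {m : ℕ} (u : Fin m → Fin (m + 1) → R) :
    (Matrix.of fun r c =>
        (Fin.snoc u (Pi.single (Fin.last m) 1) : Fin (m + 1) → Fin (m + 1) → R) c r).det =
      (Matrix.of fun r c : Fin m => u c r.castSucc).det := by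
  rw [Matrix.det_succ_column _ (Fin.last m), Finset.sum_eq_single (Fin.last m)]
  · simp only [Matrix.of_apply, Fin.snoc_last, Pi.single_eq_same, Fin.val_last, mul_one]
    rw [← two_mul, pow_mul, neg_one_sq, one_pow, one_mul]
    congr 1
    ext r c
    simp
  · intro b _ hb
    simp [hb]
  · simp

theorem exists_vector_with_divisible_coords_general (m : ℕ) (p : ℕ) (hp : p.Prime)
    (v : Fin (m + 1) → (Fin (m + 1) → ℤ)) (vplus : Fin (m + 1) → ℤ)
    (hplus : vplus = Pi.single (Fin.last m) 1)
    (H1 : ∀ i : Fin (m + 1),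
      (p : ℤ) ∣ (Matrix.of fun r c : Fin (m + 1) =>
        (Fin.snoc (fun c' : Fin m => v (i.succAbove c')) vplus :
          Fin (m + 1) → Fin (m + 1) → ℤ) c r).det)
    (H2 : ¬ (p : ℤ) ∣ Finset.univ.gcd (fun i : Fin (m + 1) =>
      (Matrix.of fun r c : Fin m =>
        primVec (fun s : Fin m => v (i.succAbove c) s.castSucc) r).det)) :
    ∃ i : Fin (m + 1), ∀ j : Fin (m + 1), j ≠ Fin.last m → (p : ℤ) ∣ v i j := by
  have hpZ : Prime (p : ℤ) := Nat.prime_iff_prime_int.mp hp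
  obtain ⟨i, hi⟩ : ∃ i : Fin (m + 1), ¬ (p : ℤ) ∣
      (Matrix.of fun r c : Fin m =>
        primVec (fun s : Fin m => v (i.succAbove c) s.castSucc) r).det := by
    by_contra! h
    exact H2 (Finset.dvd_gcd fun i _ => h i)
  have hdet := H1 i
  rw [hplus, det_snoc_single_last, det_eq_prod_gcd_mul_det_primVec] at hdet
  obtain ⟨c, -, hc⟩ :=
    (hpZ.dvd_finsetProd_iff _).mp ((hpZ.dvd_or_dvd hdet).resolve_right hi)
  refine ⟨i.succAbove c, fun j hj => ?_⟩
  obtain ⟨s, rfl⟩ := Fin.exists_castSucc_eq.mpr hj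
  exact hc.trans (natCast_gcd_natAbs_dvd _ (fun s : Fin m => v (i.succAbove c) s.castSucc)
    (Finset.mem_univ s))

/-- Let `p` be a prime and `v₁, …, vₙ, v₊, v₋ ∈ ℤⁿ` (here `n = m + 1`)
with `v₊ = (0, …, 0, 1)ᵀ`.  If `p` divides `det(v_{i₁}, …, v_{i_{n-1}}, v₊)` for every
`(n−1)`-element subset `{i₁, …, i_{n-1}} ⊂ {1, …, n}`, and if the primitive vectors `v′ᵢ`
obtained from the projections `v̄ᵢ` of the `vᵢ` to `ℤ^{n-1}` satisfy that `p` does not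
divide the gcd over all `(n−1)`-subsets of `det(v′_{i₁}, …, v′_{i_{n-1}})`, then there is
an `i` such that `p` divides every coordinate `v_iʲ` with `j ≠ n`. -/
theorem exists_vector_with_divisible_coords (m : ℕ) (p : ℕ) (hp : p.Prime)
    (v : Fin (m + 1) → (Fin (m + 1) → ℤ)) (vplus vminus : Fin (m + 1) → ℤ)
    (hplus : vplus = Pi.single (Fin.last m) 1)
    (H1 : ∀ i : Fin (m + 1),
      (p : ℤ) ∣ (Matrix.of fun r c : Fin (m + 1) =>
        (Fin.snoc (fun c' : Fin m => v (i.succAbove c')) vplus :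
          Fin (m + 1) → Fin (m + 1) → ℤ) c r).det)
    (H2 : ¬ (p : ℤ) ∣ Finset.univ.gcd (fun i : Fin (m + 1) =>
      (Matrix.of fun r c : Fin m =>
        primVec (fun s : Fin m => v (i.succAbove c) s.castSucc) r).det)) :
    ∃ i : Fin (m + 1), ∀ j : Fin (m + 1), j ≠ Fin.last m → (p : ℤ) ∣ v i j :=
  exists_vector_with_divisible_coords_general m p hp v vplus hplus H1 H2
end
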